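/- arXiv:1410.6038 — 2 statements merged into one kernel-verified Lean document; each statement's English description precedes it below -/
import Mathlib

section
/- Let p be a real number with 0 < p < 1/2. Then the function c ↦ ∑_{i odd, 1 ≤ i ≤ c} binom(c,i) p^i (1-p)^{c-i} is strictly increasing on the natural numbers: for all natural numbers c₁ < c₂, ∑_{i odd, 1 ≤ i ≤ c₁} binom(c₁,i) p^i (1-p)^{c₁-i} < ∑_{i odd, 1 ≤ i ≤ c₂} binom(c₂,i) p^i (1-p)^{c₂-i}. -/
lemma odd_error_closed_form (p : ℝ) (c : ℕ) :
    ∑ i ∈ (Finset.range (c + 1)).filter (fun i => Odd i ∧ 1 ≤ i),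
        (c.choose i : ℝ) * p ^ i * (1 - p) ^ (c - i)
      = (1 - (1 - 2 * p) ^ c) / 2 := by
  have hfilter : (Finset.range (c + 1)).filter (fun i => Odd i ∧ 1 ≤ i)
      = (Finset.range (c + 1)).filter (fun i => Odd i) := by
    apply Finset.filter_congr
    intro i _
    exact ⟨fun h => h.1, fun h => ⟨h, h.pos⟩⟩
  rw [hfilter]
  set q : ℝ := 1 - p with hq
  have h1 : (1 : ℝ) = ∑ k ∈ Finset.range (c + 1),
      p ^ k * q ^ (c - k) * (c.choose k : ℝ) := by
    rw [← add_pow, hq, show p + (1 - p) = 1 by ring, one_pow]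
  have h2 : (1 - 2 * p) ^ c = ∑ k ∈ Finset.range (c + 1),
      (-p) ^ k * q ^ (c - k) * (c.choose k : ℝ) := by
    rw [← add_pow, hq]
    ring_nf
  rw [eq_div_iff (by norm_num : (2:ℝ) ≠ 0)]
  rw [h2]
  nth_rewrite 1 [h1]
  rw [← Finset.sum_sub_distrib, Finset.sum_filter, Finset.sum_mul]
  apply Finset.sum_congr rfl
  intro i _
  rcases Nat.even_or_odd i with he | ho
  · rw [if_neg (by simpa using he)]
    rw [he.neg_pow]
    ring
  · rw [if_pos ho, ho.neg_pow]
    ring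

theorem odd_error_strictMono (p : ℝ) (hp0 : 0 < p) (hp : p < 1 / 2) :
    ∀ c₁ c₂ : ℕ, c₁ < c₂ →
      ∑ i ∈ (Finset.range (c₁ + 1)).filter (fun i => Odd i ∧ 1 ≤ i),
        (c₁.choose i : ℝ) * p ^ i * (1 - p) ^ (c₁ - i)
      < ∑ i ∈ (Finset.range (c₂ + 1)).filter (fun i => Odd i ∧ 1 ≤ i),
        (c₂.choose i : ℝ) * p ^ i * (1 - p) ^ (c₂ - i) := by
  intro c₁ c₂ hc
  rw [odd_error_closed_form, odd_error_closed_form]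
  have h0 : 0 < 1 - 2 * p := by linarith
  have h1 : 1 - 2 * p < 1 := by linarith
  have := pow_lt_pow_right_of_lt_one₀ h0 h1 hc
  linarith
end

section
/- For every natural number n ≥ 2, the minimum length of a binary index code for the single uniprior problem in which each of the n receivers knows exactly one message x_i and demands all the other messages is exactly n - 1. That is: (i) there exists C : (Fin n → ZMod 2) → (Fin (n-1) → ZMod 2) such that for every i : Fin n there exists D : (Fin (n-1) → ZMod 2) → ZMod 2 → (Fin n → ZMod 2) with D(C(x), x(i)) = x for all x; and (ii) for every N and every C : (Fin n → ZMod 2) → (Fin N → ZMod 2) such that for every i : Fin n there exists D : (Fin N → ZMod 2) → ZMod 2 → (Fin n → ZMod 2) with D(C(x), x(i)) = x for all x, one has N ≥ n - 1. -/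
theorem single_uniprior_optimal_length (n : ℕ) (hn : 2 ≤ n) :
    (∃ C : (Fin n → ZMod 2) → (Fin (n - 1) → ZMod 2),
      ∀ i : Fin n, ∃ D : (Fin (n - 1) → ZMod 2) → ZMod 2 → (Fin n → ZMod 2),
        ∀ x : Fin n → ZMod 2, D (C x) (x i) = x) ∧
    (∀ N : ℕ, ∀ C : (Fin n → ZMod 2) → (Fin N → ZMod 2),
      (∀ i : Fin n, ∃ D : (Fin N → ZMod 2) → ZMod 2 → (Fin n → ZMod 2),
        ∀ x : Fin n → ZMod 2, D (C x) (x i) = x) → N ≥ n - 1) := by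
  have hzero : ∀ a : ZMod 2, a + a = 0 := by decide
  constructor
  · -- achievability: transmit x 0 + x (j+1) for j = 0..n-2
    refine ⟨fun x j => x ⟨0, by omega⟩ + x ⟨j.val + 1, by omega⟩, fun i => ?_⟩
    refine ⟨fun y b =>
      (fun k => if hk : k.val = 0 then
          (if hi : i.val = 0 then b else y ⟨i.val - 1, by omega⟩ + b)
        else y ⟨k.val - 1, by omega⟩ +
          (if hi : i.val = 0 then b else y ⟨i.val - 1, by omega⟩ + b)), ?_⟩
    intro x
    have hx0 : (if hi : i.val = 0 then x i
        else (x ⟨0, by omega⟩ + x ⟨(i.val - 1) + 1, by omega⟩) + x i) = x ⟨0, by omega⟩ := by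
      split_ifs with hi
      · congr 1; exact Fin.ext hi
      · have : (⟨(i.val - 1) + 1, by omega⟩ : Fin n) = i :=
          Fin.ext (by simp only [Fin.val_mk]; omega)
        rw [this, add_assoc, hzero, add_zero]
    funext k
    simp only [hx0]
    split_ifs with hk
    · congr 1; exact (Fin.ext hk).symm
    · have : (⟨(k.val - 1) + 1, by omega⟩ : Fin n) = k :=
        Fin.ext (by simp only [Fin.val_mk]; omega)
      rw [this, add_comm (x ⟨0, by omega⟩), add_assoc, hzero, add_zero]
  · -- converse
    intro N C h
    obtain ⟨D, hD⟩ := h ⟨0, by omega⟩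
    have hinj : Function.Injective (fun x : Fin n → ZMod 2 => (C x, x ⟨0, by omega⟩)) := by
      intro a b hab
      have := hD a
      rw [show C a = C b from congrArg Prod.fst hab,
        show a ⟨0, by omega⟩ = b ⟨0, by omega⟩ from congrArg Prod.snd hab, hD b] at this
      exact this.symm
    have hcard := Fintype.card_le_of_injective _ hinj
    simp [Fintype.card_fun, ZMod.card] at hcard
    have : 2 ^ n ≤ 2 ^ (N + 1) := by rw [pow_succ]; omega
    have := (Nat.pow_le_pow_iff_right (by norm_num : 1 < 2)).mp this
    omega
end
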